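/- The map φ : ∂Ω₁ → ℝ² defined by φ(x,y) = (x,y) if (x,y) ∈ ∂Ω₁ ∩ ∂((−1,1)²), and φ(x,y) = (2−x, y) otherwise (i.e., on the part of ∂Ω₁ with x ≥ 1), is a Lipschitz homeomorphism from ∂Ω₁ onto ∂Ω₂. -/

import Mathlib

/-!
The boundary `∂Ω₁` is the union of `A = ∂Ω₁ ∩ ∂((-1,1)²)`, the boundary of the square without
its open right edge `{1} × (-1,1)`, and the cusp arc `C = {1 < x ≤ 2, |y| = (2 - x)²}`, while
`∂Ω₂` is `A` together with the mirror image of `C` in the line `x = 1`. That mirror image lies in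
the open square, hence is disjoint from `A`, so `φ` (the identity on `A`, the reflection on `C`)
is a bijection. It is even `1`-Lipschitz: the reflection is an isometry, and for `p ∈ A`
(`x ≤ 1`) and `q ∈ C` (`x > 1`) reflecting `q` across `x = 1` can only bring it closer to `p`.
-/

open Set Metric

/-- A point of the plane with given coordinates. -/
noncomputable def mk2 (x y : ℝ) : EuclideanSpace ℝ (Fin 2) :=
  (WithLp.equiv 2 (Fin 2 → ℝ)).symm ![x, y]

/-- The open square `(-1, 1)²`. -/
def SquareSet : Set (EuclideanSpace ℝ (Fin 2)) :=
  {z | z 0 ∈ Set.Ioo (-1:ℝ) 1 ∧ z 1 ∈ Set.Ioo (-1:ℝ) 1}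

/-- `Ω₁`: the square with an outward cusp attached. -/
def Omega1 : Set (EuclideanSpace ℝ (Fin 2)) :=
  SquareSet ∪ {z | 1 ≤ z 0 ∧ z 0 < 2 ∧ |z 1| < (2 - z 0) ^ 2}

/-- `Ω₂`: the square with a closed inward cusp removed. -/
def Omega2 : Set (EuclideanSpace ℝ (Fin 2)) :=
  SquareSet \ {z | 0 ≤ z 0 ∧ z 0 ≤ 1 ∧ |z 1| ≤ (z 0) ^ 2}

open Classical in
/-- The boundary map: identity on `∂Ω₁ ∩ ∂((-1,1)²)`, reflection `x ↦ 2 - x` elsewhere. -/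
noncomputable def phiMap (z : EuclideanSpace ℝ (Fin 2)) : EuclideanSpace ℝ (Fin 2) :=
  if z ∈ frontier Omega1 ∩ frontier SquareSet then z else mk2 (2 - z 0) (z 1)

open Filter Topology

theorem mem_closure_of_forall_add_smul_mem {V : Type*} [NormedAddCommGroup V] [NormedSpace ℝ V]
    {s : Set V} {x v : V} {δ : ℝ} (hδ : 0 < δ) (h : ∀ t ∈ Ioo 0 δ, x + t • v ∈ s) :
    x ∈ closure s := by
  have hγ : Tendsto (fun t : ℝ => x + t • v) (𝓝[>] 0) (𝓝 x) := by
    simpa using ((by fun_prop : Continuous fun t : ℝ => x + t • v).tendsto 0).mono_left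
      nhdsWithin_le_nhds
  exact mem_closure_of_tendsto hγ (mem_of_superset (Ioo_mem_nhdsGT hδ) h)

local notation "E" => EuclideanSpace ℝ (Fin 2)

@[simp] theorem mk2_apply_zero (x y : ℝ) : mk2 x y 0 = x := rfl
@[simp] theorem mk2_apply_one (x y : ℝ) : mk2 x y 1 = y := rfl

theorem mk2_eta (z : E) : mk2 (z 0) (z 1) = z := by
  ext i; fin_cases i <;> rfl

theorem dist_eq_sqrt_coords (p q : E) : dist p q = √((p 0 - q 0) ^ 2 + (p 1 - q 1) ^ 2) := by
  simp [EuclideanSpace.dist_eq, Fin.sum_univ_two, Real.dist_eq, sq_abs]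

def closedSquare : Set E := {z | -1 ≤ z 0 ∧ z 0 ≤ 1 ∧ -1 ≤ z 1 ∧ z 1 ≤ 1}

theorem isOpen_squareSet : IsOpen SquareSet := by
  simp only [SquareSet, mem_Ioo, ofPred_and]
  refine IsOpen.inter (IsOpen.inter ?_ ?_) (IsOpen.inter ?_ ?_) <;>
    exact isOpen_lt (by fun_prop) (by fun_prop)

theorem isOpen_omega1 : IsOpen Omega1 := by
  -- the cusp piece alone is not open along `x = 1`
  have h : Omega1 = SquareSet ∪ {z | 0 < z 0 ∧ z 0 < 2 ∧ |z 1| < (2 - z 0) ^ 2 ∧ |z 1| < 1} := by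
    ext z
    simp only [Omega1, SquareSet, mem_union, mem_ofPred_eq, mem_Ioo]
    constructor
    · rintro (h | ⟨h1, h2, h3⟩)
      · exact Or.inl h
      · exact Or.inr ⟨by linarith, h2, h3, by nlinarith⟩
    · rintro (h | ⟨h1, h2, h3, h4⟩)
      · exact Or.inl h
      · by_cases h5 : 1 ≤ z 0
        · exact Or.inr ⟨h5, h2, h3⟩
        · exact Or.inl ⟨⟨by linarith, by linarith⟩, abs_lt.mp h4⟩
  rw [h]
  refine isOpen_squareSet.union ?_
  simp only [ofPred_and]
  refine IsOpen.inter ?_ (IsOpen.inter ?_ (IsOpen.inter ?_ ?_)) <;>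
    exact isOpen_lt (by fun_prop) (by fun_prop)

theorem isOpen_omega2 : IsOpen Omega2 := by
  refine isOpen_squareSet.sdiff ?_
  simp only [ofPred_and]
  refine IsClosed.inter ?_ (IsClosed.inter ?_ ?_) <;> exact isClosed_le (by fun_prop) (by fun_prop)

theorem closure_squareSet : closure SquareSet = closedSquare := by
  refine (closure_minimal ?_ ?_).antisymm fun z hz => ?_
  · rintro z ⟨⟨h1, h2⟩, h3, h4⟩
    exact ⟨h1.le, h2.le, h3.le, h4.le⟩
  · simp only [closedSquare, ofPred_and]
    refine IsClosed.inter ?_ (IsClosed.inter ?_ (IsClosed.inter ?_ ?_)) <;>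
      exact isClosed_le (by fun_prop) (by fun_prop)
  · obtain ⟨h1, h2, h3, h4⟩ := hz
    refine mem_closure_of_forall_add_smul_mem (v := -z) one_pos fun t ⟨ht0, ht1⟩ => ?_
    simp only [SquareSet, mem_ofPred_eq, mem_Ioo, PiLp.add_apply, PiLp.smul_apply,
      PiLp.neg_apply, smul_eq_mul]
    refine ⟨⟨?_, ?_⟩, ?_, ?_⟩ <;> nlinarith

theorem closure_omega1 :
    closure Omega1 = closedSquare ∪ {z | 1 ≤ z 0 ∧ z 0 ≤ 2 ∧ |z 1| ≤ (2 - z 0) ^ 2} := by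
  refine (closure_minimal ?_ ?_).antisymm ?_
  · rintro z (h | ⟨h1, h2, h3⟩)
    · exact Or.inl (closure_squareSet ▸ subset_closure h)
    · exact Or.inr ⟨h1, h2.le, h3.le⟩
  · refine (closure_squareSet ▸ isClosed_closure).union ?_
    simp only [ofPred_and]
    refine IsClosed.inter ?_ (IsClosed.inter ?_ ?_) <;>
      exact isClosed_le (by fun_prop) (by fun_prop)
  · rintro z (hz | ⟨h1, h2, h3⟩)
    · rw [← closure_squareSet] at hz
      exact closure_mono subset_union_left hz
    rcases h1.eq_or_lt with h1 | h1
    · refine closure_mono subset_union_left (closure_squareSet ▸ ?_)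
      have := abs_le.mp (show |z 1| ≤ 1 by norm_num [← h1] at h3; exact h3)
      exact ⟨by linarith, h1.ge, this.1, this.2⟩
    · refine mem_closure_of_forall_add_smul_mem (v := mk2 (-1) 0) (sub_pos.mpr h1)
        fun t ⟨ht0, ht1⟩ => Or.inr ?_
      simp only [mem_ofPred_eq, PiLp.add_apply, PiLp.smul_apply, smul_eq_mul, mk2_apply_zero,
        mk2_apply_one, mul_zero, add_zero]
      refine ⟨by linarith, by linarith, h3.trans_lt ?_⟩
      nlinarith

theorem closure_omega2 : closure Omega2 = closedSquare ∩ {z | z 0 ≤ 0 ∨ z 0 ^ 2 ≤ |z 1|} := by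
  refine (closure_minimal ?_ ?_).antisymm ?_
  · rintro z ⟨⟨⟨h1, h2⟩, h3, h4⟩, hz⟩
    refine ⟨⟨h1.le, h2.le, h3.le, h4.le⟩, ?_⟩
    show z 0 ≤ 0 ∨ z 0 ^ 2 ≤ |z 1|
    by_contra! h
    exact hz ⟨h.1.le, h2.le, h.2.le⟩
  · refine (closure_squareSet ▸ isClosed_closure).inter ?_
    simp only [ofPred_or]
    exact (isClosed_le (by fun_prop) (by fun_prop)).union
      (isClosed_le (by fun_prop) (by fun_prop))
  · rintro z ⟨⟨h1, h2, h3, h4⟩, hz⟩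
    by_cases hx : z 0 ≤ 0
    · refine mem_closure_of_forall_add_smul_mem (v := -z + mk2 (-1 / 2) 0) one_pos
        fun t ⟨ht0, ht1⟩ => ⟨?_, ?_⟩
      · simp only [SquareSet, mem_ofPred_eq, mem_Ioo, PiLp.add_apply, PiLp.smul_apply,
          PiLp.neg_apply, smul_eq_mul, mk2_apply_zero, mk2_apply_one]
        refine ⟨⟨?_, ?_⟩, ?_, ?_⟩ <;> nlinarith
      · simp only [mem_ofPred_eq, PiLp.add_apply, PiLp.smul_apply, PiLp.neg_apply, smul_eq_mul,
          mk2_apply_zero]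
        intro h
        nlinarith [h.1]
    · have hz := hz.resolve_left hx
      refine mem_closure_of_forall_add_smul_mem (v := -z) one_pos fun t ⟨ht0, ht1⟩ => ⟨?_, ?_⟩
      · simp only [SquareSet, mem_ofPred_eq, mem_Ioo, PiLp.add_apply, PiLp.smul_apply,
          PiLp.neg_apply, smul_eq_mul]
        refine ⟨⟨?_, ?_⟩, ?_, ?_⟩ <;> nlinarith
      · simp only [mem_ofPred_eq, PiLp.add_apply, PiLp.smul_apply, PiLp.neg_apply, smul_eq_mul]
        rintro ⟨-, -, h⟩
        rw [show z 1 + t * -z 1 = (1 - t) * z 1 by ring, abs_mul,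
          abs_of_pos (by linarith : 0 < 1 - t)] at h
        have hx := not_le.mp hx
        nlinarith [mul_pos (mul_pos ht0 (by linarith : 0 < 1 - t)) (mul_pos hx hx)]

def outerCuspArc : Set E := {z | 1 < z 0 ∧ z 0 ≤ 2 ∧ |z 1| = (2 - z 0) ^ 2}

noncomputable def reflectAboutOne (z : E) : E := mk2 (2 - z 0) (z 1)

theorem reflectAboutOne_involutive : Function.Involutive reflectAboutOne := fun z => by
  simp only [reflectAboutOne, mk2_apply_zero, mk2_apply_one, sub_sub_cancel, mk2_eta]

theorem dist_reflectAboutOne (p q : E) :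
    dist (reflectAboutOne p) (reflectAboutOne q) = dist p q := by
  simp only [dist_eq_sqrt_coords, reflectAboutOne, mk2_apply_zero, mk2_apply_one]
  ring_nf

theorem dist_reflectAboutOne_le {p q : E} (hp : p 0 ≤ 1) (hq : 1 ≤ q 0) :
    dist p (reflectAboutOne q) ≤ dist p q := by
  simp only [dist_eq_sqrt_coords, reflectAboutOne, mk2_apply_zero, mk2_apply_one]
  gcongr √(?_ + _)
  nlinarith

theorem frontier_squareSet : frontier SquareSet = closedSquare \ SquareSet := by
  rw [isOpen_squareSet.frontier_eq, closure_squareSet]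

theorem frontier_omega1_diff_frontier_squareSet :
    frontier Omega1 \ frontier SquareSet = outerCuspArc := by
  rw [isOpen_omega1.frontier_eq, closure_omega1, frontier_squareSet]
  ext z
  simp only [Omega1, SquareSet, closedSquare, outerCuspArc, Set.mem_sdiff, mem_union,
    mem_ofPred_eq, mem_Ioo]
  constructor
  · rintro ⟨⟨hsq | ⟨h1, h2, h3⟩, hΩ⟩, hfr⟩
    · exact absurd ⟨hsq, fun h => hΩ (Or.inl h)⟩ hfr
    have hx : 1 < z 0 := by
      refine h1.lt_of_ne fun h => hfr ⟨?_, fun h' => hΩ (Or.inl h')⟩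
      have := abs_le.mp (show |z 1| ≤ 1 by norm_num [← h] at h3; exact h3)
      exact ⟨by linarith, h.ge, this⟩
    refine ⟨hx, h2, h3.antisymm (not_lt.mp fun h => hΩ (Or.inr ⟨h1, ?_, h⟩))⟩
    nlinarith [abs_nonneg (z 1)]
  · rintro ⟨h1, h2, h3⟩
    refine ⟨⟨Or.inr ⟨h1.le, h2, h3.le⟩, ?_⟩, fun h => by linarith [h.1.2.1]⟩
    rintro (⟨⟨-, h⟩, -⟩ | ⟨-, -, h⟩)
    · linarith
    · exact h.ne h3

theorem frontier_omega1_inter_frontier_squareSet :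
    frontier Omega1 ∩ frontier SquareSet = frontier SquareSet \ {z | z 0 = 1 ∧ |z 1| < 1} := by
  rw [isOpen_omega1.frontier_eq, closure_omega1, frontier_squareSet]
  ext z
  simp only [Omega1, closedSquare, Set.mem_sdiff, mem_inter_iff, mem_union, mem_ofPred_eq]
  constructor
  · rintro ⟨⟨-, hΩ⟩, hfr⟩
    refine ⟨hfr, fun ⟨h1, h2⟩ => hΩ (Or.inr ⟨h1.ge, by linarith, ?_⟩)⟩
    norm_num [h1, h2]
  · rintro ⟨hfr, hedge⟩
    refine ⟨⟨Or.inl hfr.1, ?_⟩, hfr⟩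
    rintro (h | ⟨h1, -, h3⟩)
    · exact hfr.2 h
    · have h1 : z 0 = 1 := le_antisymm hfr.1.2.1 h1
      exact hedge ⟨h1, by norm_num [h1] at h3; exact h3⟩

theorem frontier_omega2 : frontier Omega2 =
    frontier Omega1 ∩ frontier SquareSet ∪ reflectAboutOne '' outerCuspArc := by
  rw [reflectAboutOne_involutive.image_eq_preimage_symm, frontier_omega1_inter_frontier_squareSet,
    isOpen_omega2.frontier_eq, closure_omega2, frontier_squareSet]
  ext z
  have hS : z ∈ SquareSet ↔ (-1 < z 0 ∧ z 0 < 1) ∧ |z 1| < 1 := by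
    simp only [SquareSet, mem_ofPred_eq, mem_Ioo, abs_lt]
  by_cases hzS : z ∈ SquareSet
  · simp only [Omega2, closedSquare, outerCuspArc, reflectAboutOne, Set.mem_sdiff, mem_union,
      mem_inter_iff, mem_preimage, mem_ofPred_eq, mk2_apply_zero, mk2_apply_one, sub_sub_cancel,
      hzS, true_and, not_not, not_true_eq_false, and_false, false_and, false_or]
    constructor
    · rintro ⟨⟨-, hor⟩, h0, -, hle⟩
      refine ⟨by linarith [(hS.mp hzS).1.2], by linarith, hle.antisymm ?_⟩
      rcases hor with h | h
      · nlinarith [abs_nonneg (z 1)]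
      · exact h
    · rintro ⟨h1, h2, h3⟩
      obtain ⟨⟨hx1, hx2⟩, hy1, hy2⟩ := hzS
      exact ⟨⟨⟨hx1.le, hx2.le, hy1.le, hy2.le⟩, Or.inr h3.ge⟩, by linarith, hx2.le, h3.le⟩
  · simp only [Omega2, closedSquare, outerCuspArc, reflectAboutOne, Set.mem_sdiff, mem_union,
      mem_inter_iff, mem_preimage, mem_ofPred_eq, mk2_apply_zero, mk2_apply_one, sub_sub_cancel,
      hzS, false_and, not_false_eq_true, and_true]
    constructor
    · rintro ⟨hsq, hor⟩
      refine Or.inl ⟨hsq, fun ⟨h1, h2⟩ => ?_⟩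
      rcases hor with h | h <;> nlinarith
    · rintro (⟨hsq, hedge⟩ | ⟨h1, h2, h3⟩)
      · refine ⟨hsq, ?_⟩
        by_contra! h
        have hy : |z 1| < 1 := by nlinarith
        have hx : z 0 < 1 := hsq.2.1.lt_of_ne fun h1 => hedge ⟨h1, hy⟩
        exact hzS (hS.mpr ⟨⟨by linarith, hx⟩, hy⟩)
      · exact absurd (hS.mpr ⟨⟨by linarith, by linarith⟩, by nlinarith⟩) hzS

theorem frontier_omega1 :
    frontier Omega1 = frontier Omega1 ∩ frontier SquareSet ∪ outerCuspArc := by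
  rw [← frontier_omega1_diff_frontier_squareSet, inter_union_sdiff]

theorem mapsTo_reflectAboutOne_outerCuspArc : MapsTo reflectAboutOne outerCuspArc SquareSet := by
  rintro z ⟨h1, h2, h3⟩
  simp only [SquareSet, reflectAboutOne, mem_ofPred_eq, mem_Ioo, mk2_apply_zero, mk2_apply_one]
  have hy : |z 1| < 1 := by nlinarith
  exact ⟨⟨by linarith, by linarith⟩, abs_lt.mp hy⟩

theorem phiMap_of_mem_frontier_inter {z : E} (hz : z ∈ frontier Omega1 ∩ frontier SquareSet) :
    phiMap z = z :=
  if_pos hz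

theorem phiMap_of_mem_outerCuspArc {z : E} (hz : z ∈ outerCuspArc) :
    phiMap z = reflectAboutOne z :=
  if_neg fun h => (frontier_omega1_diff_frontier_squareSet ▸ hz).2 h.2

theorem lipschitzOnWith_phiMap : LipschitzOnWith 1 phiMap (frontier Omega1) := by
  have hA {p : E} (hp : p ∈ frontier Omega1 ∩ frontier SquareSet) : p 0 ≤ 1 :=
    (frontier_squareSet ▸ hp.2).1.2.1
  refine LipschitzOnWith.mk_one fun p hp q hq => ?_
  rw [frontier_omega1] at hp hq
  rcases hp with hp | hp <;> rcases hq with hq | hq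
  · rw [phiMap_of_mem_frontier_inter hp, phiMap_of_mem_frontier_inter hq]
  · rw [phiMap_of_mem_frontier_inter hp, phiMap_of_mem_outerCuspArc hq]
    exact dist_reflectAboutOne_le (hA hp) hq.1.le
  · rw [phiMap_of_mem_outerCuspArc hp, phiMap_of_mem_frontier_inter hq, dist_comm, dist_comm p]
    exact dist_reflectAboutOne_le (hA hq) hp.1.le
  · rw [phiMap_of_mem_outerCuspArc hp, phiMap_of_mem_outerCuspArc hq, dist_reflectAboutOne]

theorem bijOn_phiMap : BijOn phiMap (frontier Omega1) (frontier Omega2) := by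
  have hA : BijOn phiMap (frontier Omega1 ∩ frontier SquareSet)
      (frontier Omega1 ∩ frontier SquareSet) :=
    (bijOn_id _).congr fun z hz => (phiMap_of_mem_frontier_inter hz).symm
  have hC : BijOn phiMap outerCuspArc (reflectAboutOne '' outerCuspArc) :=
    reflectAboutOne_involutive.injective.injOn.bijOn_image.congr fun z hz =>
      (phiMap_of_mem_outerCuspArc hz).symm
  have hdisj : Disjoint (frontier Omega1 ∩ frontier SquareSet) outerCuspArc := by
    rw [← frontier_omega1_diff_frontier_squareSet]
    exact disjoint_sdiff_right.mono_left inter_subset_right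
  -- the reflected arc lies in the open square, which misses its own frontier
  have hsep : ∀ x ∈ frontier Omega1 ∩ frontier SquareSet, ∀ y ∈ outerCuspArc,
      phiMap x ≠ phiMap y := by
    intro x hx y hy hxy
    rw [phiMap_of_mem_frontier_inter hx, phiMap_of_mem_outerCuspArc hy] at hxy
    exact isOpen_squareSet.inter_frontier_eq.subset
      ⟨hxy ▸ mapsTo_reflectAboutOne_outerCuspArc hy, hx.2⟩
  have hunion := hA.union hC ((injOn_union hdisj).mpr ⟨hA.injOn, hC.injOn, hsep⟩)
  rwa [← frontier_omega1, ← frontier_omega2] at hunion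

/-- `phiMap` is a Lipschitz homeomorphism from `∂Ω₁` onto `∂Ω₂`. -/
theorem phiMap_lipschitz_homeo :
    ContinuousOn phiMap (frontier Omega1) ∧ Set.InjOn phiMap (frontier Omega1) ∧
      phiMap '' frontier Omega1 = frontier Omega2 ∧
      (∃ L : ℝ, 0 ≤ L ∧ ∀ x ∈ frontier Omega1, ∀ y ∈ frontier Omega1,
        dist (phiMap x) (phiMap y) ≤ L * dist x y) :=
  ⟨lipschitzOnWith_phiMap.continuousOn, bijOn_phiMap.injOn, bijOn_phiMap.image_eq,
    1, zero_le_one, fun x hx y hy => by simpa using lipschitzOnWith_phiMap.dist_le_mul x hx y hy⟩
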